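/- arXiv:2408.09170 — 4 statements merged into one kernel-verified Lean document; each statement's English description precedes it below -/
import Mathlib

section
/- Let η ∈ C^1_c(ℝ^N) with η = 1 on B_1, η = 0 outside B_2, 0 ≤ η ≤ 1 and ‖∇η‖_∞ ≤ 2. For k ∈ ℕ set η_k(x) = η(x/k) and u_k = η_k u. Then [u_k]^i_{s,p,δ} ≤ 2^{p−1} [u]^i_{s,p,δ} + (2^{2p} δ^{p(1−s)} / (k^p p(1−s))) ‖u‖_{L^p}^p. -/
open MeasureTheory Real Filter Topology
open scoped ENNReal

noncomputable section

/-- The i-th standard basis vector of `ℝ^N`. -/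
def stdBasis (N : ℕ) (i : Fin N) : Fin N → ℝ := Pi.single i 1

/-- The truncated (peridynamic) directional fractional Gagliardo seminorm
`[u]^i_{s,p,δ} = ∫_{ℝ^N} ∫_{|h|≤δ} |u(x+h e_i) − u(x)|^p / |h|^{1+sp} dh dx`. -/
def periSeminorm (N : ℕ) (i : Fin N) (s p δ : ℝ) (u : (Fin N → ℝ) → ℝ) : ℝ≥0∞ :=
  ∫⁻ x : Fin N → ℝ, ∫⁻ h in Set.Icc (-δ) δ,
    ENNReal.ofReal (|u (x + h • stdBasis N i) - u x| ^ p / |h| ^ (1 + s * p))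

/-! Write `u_k(y) - u_k(x) = η_k(y) (u(y) - u(x)) + (η_k(y) - η_k(x)) u(x)`. The first term is
controlled by `|u(y) - u(x)|` since `0 ≤ η_k ≤ 1`, the second by `(2/k) |h| |u(x)|` since `η_k` is
`2/k`-Lipschitz. Convexity of `t ↦ t^p` gives `(a + b)^p ≤ 2^{p-1} (a^p + b^p)`; after division by
`|h|^{1+sp}` the first part integrates to `2^{p-1} [u]`, and the second to
`2^{p-1} (2/k)^p ‖u‖_p^p ∫_{-δ}^{δ} |h|^{p(1-s)-1} dh`, a convergent integral since `s < 1`. -/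

lemma Real.add_rpow_le_two_rpow_sub_one_mul {a b p : ℝ} (ha : 0 ≤ a) (hb : 0 ≤ b) (hp : 1 ≤ p) :
    (a + b) ^ p ≤ 2 ^ (p - 1) * (a ^ p + b ^ p) := by
  lift a to NNReal using ha
  lift b to NNReal using hb
  exact_mod_cast NNReal.rpow_add_le_mul_rpow_add_rpow a b hp

lemma abs_mul_sub_mul_le {a b v w : ℝ} (hb : |b| ≤ 1) :
    |b * w - a * v| ≤ |w - v| + |b - a| * |v| :=
  calc |b * w - a * v| = |b * (w - v) + (b - a) * v| := by ring_nf
    _ ≤ |b| * |w - v| + |b - a| * |v| := by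
        simpa only [abs_mul] using abs_add_le (b * (w - v)) ((b - a) * v)
    _ ≤ |w - v| + |b - a| * |v| := by
        gcongr; exact mul_le_of_le_one_left (abs_nonneg _) hb

lemma LipschitzWith.abs_mul_sub_mul_rpow_le {E : Type*} [PseudoMetricSpace E] {φ : E → ℝ}
    {L : NNReal} (hL : LipschitzWith L φ) (hφ : ∀ x, |φ x| ≤ 1) (v : E → ℝ) {p : ℝ} (hp : 1 ≤ p)
    (x y : E) :
    |φ y * v y - φ x * v x| ^ p ≤ 2 ^ (p - 1) * (|v y - v x| ^ p + (L * dist y x * |v x|) ^ p) := by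
  have hφxy : |φ y - φ x| ≤ L * dist y x := by
    simpa only [Real.dist_eq] using hL.dist_le_mul y x
  calc |φ y * v y - φ x * v x| ^ p ≤ (|v y - v x| + L * dist y x * |v x|) ^ p := by
        gcongr
        exact (abs_mul_sub_mul_le (hφ y)).trans (by gcongr)
    _ ≤ _ := Real.add_rpow_le_two_rpow_sub_one_mul (abs_nonneg _) (by positivity) hp

lemma lintegral_lintegral_le_const_mul_add_mul {α β : Type*} [MeasurableSpace α]
    [MeasurableSpace β] {μ : Measure α} {ν : Measure β} {F G : α → β → ℝ≥0∞} {w : α → ℝ≥0∞}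
    {ρ : β → ℝ≥0∞} {c : ℝ≥0∞} (hc : c ≠ ∞) (hw : AEMeasurable w μ) (hρ : AEMeasurable ρ ν)
    (hFG : ∀ x, ∀ᵐ h ∂ν, F x h ≤ c * G x h + w x * ρ h) :
    ∫⁻ x, ∫⁻ h, F x h ∂ν ∂μ ≤
      c * ∫⁻ x, ∫⁻ h, G x h ∂ν ∂μ + (∫⁻ x, w x ∂μ) * ∫⁻ h, ρ h ∂ν :=
  calc ∫⁻ x, ∫⁻ h, F x h ∂ν ∂μ ≤ ∫⁻ x, (c * ∫⁻ h, G x h ∂ν + w x * ∫⁻ h, ρ h ∂ν) ∂μ := by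
        refine lintegral_mono fun x => (lintegral_mono_ae (hFG x)).trans_eq ?_
        rw [lintegral_add_right' _ (hρ.const_mul _), lintegral_const_mul' _ _ hc,
          lintegral_const_mul'' _ hρ]
    _ = _ := by
        rw [lintegral_add_right' _ (hw.mul_const _), lintegral_const_mul' _ _ hc,
          lintegral_mul_const'' _ hw]

lemma lintegral_Icc_abs_le_two_mul (f : ℝ → ℝ≥0∞) (δ : ℝ) :
    ∫⁻ h in Set.Icc (-δ) δ, f |h| ≤ 2 * ∫⁻ h in Set.Icc 0 δ, f h := by
  have hpos : ∫⁻ h in Set.Icc 0 δ, f |h| = ∫⁻ h in Set.Icc 0 δ, f h :=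
    setLIntegral_congr_fun measurableSet_Icc fun h hh => by rw [abs_of_nonneg hh.1]
  have hneg : ∫⁻ h in Set.Icc (-δ) 0, f |h| = ∫⁻ h in Set.Icc 0 δ, f |h| := by
    rw [show Set.Icc (-δ) 0 = Neg.neg '' Set.Icc 0 δ by simp,
      ← (Measure.measurePreserving_neg volume).setLIntegral_comp_emb
        (MeasurableEquiv.neg ℝ).measurableEmbedding]
    simp only [abs_neg]
  calc ∫⁻ h in Set.Icc (-δ) δ, f |h| ≤ ∫⁻ h in Set.Icc (-δ) 0 ∪ Set.Icc 0 δ, f |h| :=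
        lintegral_mono_set fun h hh => (le_total h 0).imp (⟨hh.1, ·⟩) (⟨·, hh.2⟩)
    _ ≤ (∫⁻ h in Set.Icc (-δ) 0, f |h|) + ∫⁻ h in Set.Icc 0 δ, f |h| := lintegral_union_le _ _ _
    _ = 2 * ∫⁻ h in Set.Icc 0 δ, f h := by rw [hneg, hpos, two_mul]

lemma lintegral_Icc_zero_rpow_sub_one {r δ : ℝ} (hr : 0 < r) (hδ : 0 ≤ δ) :
    ∫⁻ h in Set.Icc 0 δ, ENNReal.ofReal (h ^ (r - 1)) = ENNReal.ofReal (δ ^ r / r) := by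
  have hint : IntegrableOn (fun h : ℝ => h ^ (r - 1)) (Set.Ioc 0 δ) := by
    rw [← intervalIntegrable_iff_integrableOn_Ioc_of_le hδ]
    exact intervalIntegral.intervalIntegrable_rpow' (by linarith)
  rw [← Measure.restrict_congr_set Ioc_ae_eq_Icc, ← ofReal_integral_eq_lintegral_ofReal hint
    ((ae_restrict_iff' measurableSet_Ioc).2 (ae_of_all _ fun h hh => rpow_nonneg hh.1.le _)),
    ← intervalIntegral.integral_of_le hδ, integral_rpow (Or.inl (by linarith)),
    sub_add_cancel, Real.zero_rpow hr.ne', sub_zero]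

lemma lintegral_Icc_abs_rpow_sub_one_le {r δ : ℝ} (hr : 0 < r) (hδ : 0 ≤ δ) :
    ∫⁻ h in Set.Icc (-δ) δ, ENNReal.ofReal (|h| ^ (r - 1)) ≤ ENNReal.ofReal (2 * δ ^ r / r) := by
  calc _ ≤ 2 * ∫⁻ h in Set.Icc 0 δ, ENNReal.ofReal (h ^ (r - 1)) :=
        lintegral_Icc_abs_le_two_mul (fun h => ENNReal.ofReal (h ^ (r - 1))) δ
    _ = ENNReal.ofReal (2 * δ ^ r / r) := by
        rw [lintegral_Icc_zero_rpow_sub_one hr hδ, mul_div_assoc,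
          ENNReal.ofReal_mul zero_le_two, ENNReal.ofReal_ofNat]

lemma norm_smul_stdBasis {N : ℕ} (i : Fin N) (h : ℝ) : ‖h • stdBasis N i‖ = |h| := by
  rw [norm_smul, stdBasis, Pi.norm_single, norm_one, mul_one, Real.norm_eq_abs]

lemma LipschitzWith.abs_mul_sub_mul_rpow_div_le {N : ℕ} (i : Fin N) {s p : ℝ} (hp : 1 ≤ p)
    {φ : (Fin N → ℝ) → ℝ} {L : NNReal} (hL : LipschitzWith L φ) (hφ : ∀ x, |φ x| ≤ 1)
    (v : (Fin N → ℝ) → ℝ) (x : Fin N → ℝ) {h : ℝ} (h0 : h ≠ 0) :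
    |φ (x + h • stdBasis N i) * v (x + h • stdBasis N i) - φ x * v x| ^ p / |h| ^ (1 + s * p) ≤
      2 ^ (p - 1) * (|v (x + h • stdBasis N i) - v x| ^ p / |h| ^ (1 + s * p)) +
        2 ^ (p - 1) * L ^ p * |v x| ^ p * |h| ^ (p * (1 - s) - 1) := by
  have hh : 0 < |h| := abs_pos.2 h0
  have hdist : dist (x + h • stdBasis N i) x = |h| := by
    rw [dist_eq_norm, add_sub_cancel_left, norm_smul_stdBasis]
  have hsplit : (L * |h| * |v x|) ^ p / |h| ^ (1 + s * p) =
      L ^ p * |v x| ^ p * |h| ^ (p * (1 - s) - 1) := by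
    rw [mul_rpow (by positivity) (abs_nonneg _), mul_rpow L.coe_nonneg hh.le,
      show p * (1 - s) - 1 = p - (1 + s * p) by ring, rpow_sub hh]
    ring
  calc _ ≤ 2 ^ (p - 1) * (|v (x + h • stdBasis N i) - v x| ^ p + (L * |h| * |v x|) ^ p) /
          |h| ^ (1 + s * p) := by
        gcongr
        simpa only [hdist] using hL.abs_mul_sub_mul_rpow_le hφ v hp x (x + h • stdBasis N i)
    _ = _ := by rw [mul_add, add_div, mul_div_assoc, mul_div_assoc, hsplit]; ring

theorem periSeminorm_mul_le {N : ℕ} (i : Fin N) {s p : ℝ} (δ : ℝ) (hp : 1 ≤ p)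
    {φ u : (Fin N → ℝ) → ℝ} {L : NNReal} (hL : LipschitzWith L φ) (hφ : ∀ x, |φ x| ≤ 1)
    (hu : AEMeasurable u) :
    periSeminorm N i s p δ (fun x => φ x * u x) ≤
      ENNReal.ofReal (2 ^ (p - 1)) * periSeminorm N i s p δ u +
        ENNReal.ofReal (2 ^ (p - 1) * L ^ p) * (∫⁻ x, ENNReal.ofReal (|u x| ^ p)) *
          ∫⁻ h in Set.Icc (-δ) δ, ENNReal.ofReal (|h| ^ (p * (1 - s) - 1)) := by
  have hw : AEMeasurable fun x => ENNReal.ofReal (2 ^ (p - 1) * L ^ p * |u x| ^ p) := by fun_prop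
  have hρ : AEMeasurable fun h : ℝ => ENNReal.ofReal (|h| ^ (p * (1 - s) - 1)) := by fun_prop
  have hae : ∀ᵐ h ∂(volume.restrict (Set.Icc (-δ) δ)), h ≠ 0 :=
    ae_restrict_of_ae (ae_iff.2 (by simp))
  unfold periSeminorm
  refine (lintegral_lintegral_le_const_mul_add_mul (c := ENNReal.ofReal (2 ^ (p - 1)))
    (G := fun x h => ENNReal.ofReal (|u (x + h • stdBasis N i) - u x| ^ p / |h| ^ (1 + s * p)))
    ENNReal.ofReal_ne_top hw hρ.restrict fun x => hae.mono fun h hh => ?_).trans_eq ?_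
  · rw [← ENNReal.ofReal_mul (by positivity), ← ENNReal.ofReal_mul (by positivity),
      ← ENNReal.ofReal_add (by positivity) (by positivity)]
    exact ENNReal.ofReal_le_ofReal (hL.abs_mul_sub_mul_rpow_div_le i hp hφ u x hh)
  · simp only [ENNReal.ofReal_mul (by positivity : (0 : ℝ) ≤ 2 ^ (p - 1) * L ^ p)]
    rw [lintegral_const_mul' _ _ ENNReal.ofReal_ne_top]

theorem periSeminorm_truncation_le_general (N : ℕ) (i : Fin N)
    (p s δ : ℝ) (hp : 1 < p) (hs1 : s < 1) (hδ : 0 < δ)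
    (u : (Fin N → ℝ) → ℝ) (hu : MemLp u (ENNReal.ofReal p) volume)
    (η : (Fin N → ℝ) → ℝ) (hη : ContDiff ℝ 1 η)
    (hη01 : ∀ x, 0 ≤ η x ∧ η x ≤ 1)
    (hηgrad : ∀ x, ‖fderiv ℝ η x‖ ≤ 2)
    (k : ℕ) (hk : 0 < k) :
    periSeminorm N i s p δ (fun x => η ((k : ℝ)⁻¹ • x) * u x) ≤
      ENNReal.ofReal (2 ^ (p - 1)) * periSeminorm N i s p δ u +
        ENNReal.ofReal (2 ^ (2 * p) * δ ^ (p * (1 - s)) / ((k : ℝ) ^ p * p * (1 - s)) *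
          ∫ x : Fin N → ℝ, |u x| ^ p) := by
  have hp0 : 0 < p := by linarith
  have hk0 : (0 : ℝ) < k := Nat.cast_pos.2 hk
  have hLip : LipschitzWith (2 * ‖(k : ℝ)⁻¹‖₊) fun x => η ((k : ℝ)⁻¹ • x) :=
    (lipschitzWith_of_nnnorm_fderiv_le (hη.differentiable one_ne_zero)
      fun x => by exact_mod_cast hηgrad x).comp (lipschitzWith_smul _)
  have hL : ((2 * ‖(k : ℝ)⁻¹‖₊ : NNReal) : ℝ) = 2 / k := by simp [div_eq_mul_inv]
  have hIu : ∫⁻ x, ENNReal.ofReal (|u x| ^ p) = ENNReal.ofReal (∫ x, |u x| ^ p) := by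
    have hI := hu.integrable_norm_rpow (by simpa using hp0) ENNReal.ofReal_ne_top
    rw [ENNReal.toReal_ofReal hp0.le] at hI
    exact (ofReal_integral_eq_lintegral_ofReal hI (ae_of_all _ fun x => by positivity)).symm
  refine (periSeminorm_mul_le i δ hp.le hLip (fun x => (abs_of_nonneg (hη01 _).1).trans_le
    (hη01 _).2) hu.1.aemeasurable).trans (add_le_add le_rfl ?_)
  rw [hL, hIu]
  calc _ ≤ ENNReal.ofReal (2 ^ (p - 1) * (2 / k) ^ p) * ENNReal.ofReal (∫ x, |u x| ^ p) *
        ENNReal.ofReal (2 * δ ^ (p * (1 - s)) / (p * (1 - s))) := by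
        gcongr
        exact lintegral_Icc_abs_rpow_sub_one_le (mul_pos hp0 (by linarith)) hδ.le
    _ = _ := by
        rw [← ENNReal.ofReal_mul (by positivity), ← ENNReal.ofReal_mul (by positivity)]
        congr 1
        rw [div_rpow zero_le_two hk0.le, rpow_sub_one two_ne_zero, two_mul p, rpow_add two_pos]
        field_simp

theorem periSeminorm_truncation_le (N : ℕ) (hN : 1 ≤ N) (i : Fin N)
    (p s δ : ℝ) (hp : 1 < p) (hs : 0 < s) (hs1 : s < 1) (hδ : 0 < δ)
    (u : (Fin N → ℝ) → ℝ) (hu : MemLp u (ENNReal.ofReal p) volume)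
    (hufin : periSeminorm N i s p δ u < ⊤)
    (η : (Fin N → ℝ) → ℝ) (hη : ContDiff ℝ 1 η) (hηcpt : HasCompactSupport η)
    (hη1 : ∀ x ∈ Metric.ball (0 : Fin N → ℝ) 1, η x = 1)
    (hη0 : ∀ x ∉ Metric.ball (0 : Fin N → ℝ) 2, η x = 0)
    (hη01 : ∀ x, 0 ≤ η x ∧ η x ≤ 1)
    (hηgrad : ∀ x, ‖fderiv ℝ η x‖ ≤ 2)
    (k : ℕ) (hk : 0 < k) :
    periSeminorm N i s p δ (fun x => η ((k : ℝ)⁻¹ • x) * u x) ≤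
      ENNReal.ofReal (2 ^ (p - 1)) * periSeminorm N i s p δ u +
        ENNReal.ofReal (2 ^ (2 * p) * δ ^ (p * (1 - s)) / ((k : ℝ) ^ p * p * (1 - s)) *
          ∫ x : Fin N → ℝ, |u x| ^ p) :=
  periSeminorm_truncation_le_general N i p s δ hp hs1 hδ u hu η hη hη01 hηgrad k hk
end
end

section
/- Let u ∈ C^2_c(ℝ^N), 0 < s < 1, 1 < p < ∞. Then lim_{δ→0^+} δ^{−p(1−s)} ∫_{ℝ^N} ∫_{|h|≤δ} |u(x+h e_i) − u(x)|^p |h|^{−1−sp} dh dx = (2/(p(1−s))) ∫_{ℝ^N} |∂_i u(x)|^p dx. -/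
/-!
Write `∂u = ∂_i u`. Since `∇u` is `L`-Lipschitz, `|u(x + h e_i) - u(x) - h ∂u(x)| ≤ L h²`, so for
`|h| ≤ δ` the quotient `|u(x + h e_i) - u(x)| / |h|` lies between `(|∂u(x)| - Lδ)⁺` and
`|∂u(x)| + Lδ`. Integrating against `|h|^(-1-sp)` over `[-δ, δ]` produces the factor
`2 δ^(p(1-s)) / (p(1-s))`, and for `δ ≤ 1` the outer integrand vanishes off the compact set
`K = cthickening 1 (tsupport u)`. Hence `δ^(-p(1-s)) [u]_δ` is squeezed between
`2/(p(1-s)) Φ(∓Lδ)`, where `Φ(t) = ∫_K ((|∂u| + t)⁺)^p` is continuous with `Φ(0) = ∫ |∂u|^p`.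
-/
open MeasureTheory Real Filter Topology
open scoped ENNReal

noncomputable section

open Set
open scoped NNReal

lemma norm_stdBasis (N : ℕ) (i : Fin N) : ‖stdBasis N i‖ = 1 := by
  simp [stdBasis, Pi.norm_single]

lemma integral_Icc_neg_abs_rpow {r δ : ℝ} (hr : -1 < r) (hδ : 0 ≤ δ) :
    ∫ h in Icc (-δ) δ, |h| ^ r = 2 * (δ ^ (r + 1) / (r + 1)) := by
  -- the integrand, cut off to `[-δ, δ]`, is a function of `|h|`: fold it onto `(0, δ]`
  have hind : (Icc (-δ) δ).indicator (fun h : ℝ => |h| ^ r)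
      = fun h => (Iic δ).indicator (fun t : ℝ => t ^ r) |h| := by
    ext h
    simp [indicator_apply, abs_le]
  rw [← integral_indicator measurableSet_Icc, hind, integral_comp_abs,
    setIntegral_indicator measurableSet_Iic, Ioi_inter_Iic,
    ← intervalIntegral.integral_of_le hδ, integral_rpow (Or.inl hr),
    zero_rpow (by linarith), sub_zero]

lemma lintegral_Icc_abs_mul_rpow_div {p s δ a : ℝ} (hq : 0 < p * (1 - s)) (hδ : 0 < δ)
    (ha : 0 ≤ a) :
    ∫⁻ h in Icc (-δ) δ, ENNReal.ofReal ((|h| * a) ^ p / |h| ^ (1 + s * p)) =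
      ENNReal.ofReal (2 * δ ^ (p * (1 - s)) / (p * (1 - s)) * a ^ p) := by
  set q := p * (1 - s)
  have hker : ∫ h in Icc (-δ) δ, |h| ^ (q - 1) = 2 * δ ^ q / q := by
    rw [integral_Icc_neg_abs_rpow (by linarith) hδ.le, sub_add_cancel, mul_div_assoc]
  have hint : IntegrableOn (fun h : ℝ => |h| ^ (q - 1)) (Icc (-δ) δ) :=
    .of_integral_ne_zero (by rw [hker]; positivity)
  have hae : ∀ᵐ h ∂(volume.restrict (Icc (-δ) δ)),
      ENNReal.ofReal ((|h| * a) ^ p / |h| ^ (1 + s * p)) =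
        ENNReal.ofReal (a ^ p * |h| ^ (q - 1)) := by
    filter_upwards [ae_restrict_of_ae (volume.ae_ne (0 : ℝ))] with h hh
    rw [mul_rpow (abs_nonneg h) ha, show q - 1 = p - (1 + s * p) by ring,
      rpow_sub (abs_pos.mpr hh)]
    ring_nf
  rw [lintegral_congr_ae hae, ← ofReal_integral_eq_lintegral_ofReal (hint.const_mul _)
    (ae_of_all _ fun h => by positivity), integral_const_mul, hker, mul_comm]

lemma le_lintegral_Icc_of_abs_mul_le {p s δ m : ℝ} {a : ℝ → ℝ} (hp : 0 ≤ p)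
    (hq : 0 < p * (1 - s)) (hδ : 0 < δ) (hm : 0 ≤ m)
    (ham : ∀ h ∈ Icc (-δ) δ, |h| * m ≤ a h) :
    ENNReal.ofReal (2 * δ ^ (p * (1 - s)) / (p * (1 - s)) * m ^ p) ≤
      ∫⁻ h in Icc (-δ) δ, ENNReal.ofReal (a h ^ p / |h| ^ (1 + s * p)) := by
  rw [← lintegral_Icc_abs_mul_rpow_div hq hδ hm]
  refine setLIntegral_mono' measurableSet_Icc fun h hh => ENNReal.ofReal_le_ofReal ?_
  gcongr
  exact ham h hh

lemma lintegral_Icc_le_of_le_abs_mul {p s δ M : ℝ} {a : ℝ → ℝ} (hp : 0 ≤ p)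
    (hq : 0 < p * (1 - s)) (hδ : 0 < δ) (hM : 0 ≤ M) (ha : ∀ h, 0 ≤ a h)
    (haM : ∀ h ∈ Icc (-δ) δ, a h ≤ |h| * M) :
    ∫⁻ h in Icc (-δ) δ, ENNReal.ofReal (a h ^ p / |h| ^ (1 + s * p)) ≤
      ENNReal.ofReal (2 * δ ^ (p * (1 - s)) / (p * (1 - s)) * M ^ p) := by
  rw [← lintegral_Icc_abs_mul_rpow_div hq hδ hM]
  refine setLIntegral_mono' measurableSet_Icc fun h hh => ENNReal.ofReal_le_ofReal ?_
  gcongr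
  · exact ha h
  · exact haM h hh

lemma norm_sub_sub_fderiv_le {E F : Type*} [NormedAddCommGroup E] [NormedSpace ℝ E]
    [NormedAddCommGroup F] [NormedSpace ℝ F] {f : E → F} {L : ℝ≥0}
    (hf : Differentiable ℝ f) (hL : LipschitzWith L (fderiv ℝ f)) (x v : E) :
    ‖f (x + v) - f x - fderiv ℝ f x v‖ ≤ L * ‖v‖ ^ 2 := by
  have hbound : ∀ y ∈ Metric.closedBall x ‖v‖, ‖fderiv ℝ f y - fderiv ℝ f x‖ ≤ L * ‖v‖ :=
    fun y hy => by
      rw [← dist_eq_norm]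
      exact (hL.dist_le_mul y x).trans (by gcongr; exact hy)
  have := (convex_closedBall x ‖v‖).norm_image_sub_le_of_norm_fderiv_le' (fun y _ => hf y)
    hbound (Metric.mem_closedBall_self (norm_nonneg v)) (y := x + v) (by simp)
  simpa [sq, mul_assoc] using this

lemma abs_mul_max_sub_le_abs {Δ h d ε : ℝ} (H : |Δ - h * d| ≤ |h| * ε) :
    |h| * max (|d| - ε) 0 ≤ |Δ| := by
  rw [mul_max_of_nonneg _ _ (abs_nonneg h), mul_zero]
  have := abs_sub_abs_le_abs_sub (h * d) Δ
  rw [abs_sub_comm, abs_mul] at this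
  exact max_le (by linarith) (abs_nonneg _)

lemma abs_le_abs_mul_max_add {Δ h d ε : ℝ} (H : |Δ - h * d| ≤ |h| * ε) :
    |Δ| ≤ |h| * max (|d| + ε) 0 := by
  have := abs_sub_abs_le_abs_sub Δ (h * d)
  rw [abs_mul] at this
  calc |Δ| ≤ |h| * (|d| + ε) := by linarith
    _ ≤ |h| * max (|d| + ε) 0 := by gcongr; exact le_max_left _ _

lemma eq_zero_of_notMem_cthickening_tsupport {E β : Type*} [SeminormedAddCommGroup E] [Zero β]
    {f : E → β} {x v : E} {ε : ℝ} (hx : x ∉ Metric.cthickening ε (tsupport f))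
    (hv : ‖v‖ ≤ ε) : f (x + v) = 0 :=
  image_eq_zero_of_notMem_tsupport fun hmem =>
    hx (Metric.mem_cthickening_of_dist_le x (x + v) ε _ hmem (by simpa [dist_eq_norm] using hv))

lemma ofReal_setIntegral_eq_setLIntegral {X : Type*} [TopologicalSpace X] [MeasurableSpace X]
    [OpensMeasurableSpace X] [T2Space X] {μ : Measure X} [IsFiniteMeasureOnCompacts μ]
    {K : Set X} {g : X → ℝ} (hK : IsCompact K) (hg : Continuous g) (hg0 : ∀ x, 0 ≤ g x) :
    ENNReal.ofReal (∫ x in K, g x ∂μ) = ∫⁻ x in K, ENNReal.ofReal (g x) ∂μ :=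
  ofReal_integral_eq_lintegral_ofReal (hg.continuousOn.integrableOn_compact hK) (ae_of_all _ hg0)

lemma continuous_setIntegral_max_add_rpow {X : Type*} [TopologicalSpace X] [MeasurableSpace X]
    [OpensMeasurableSpace X] {μ : Measure X} [IsLocallyFiniteMeasure μ] {K : Set X}
    {f : X → ℝ} {p : ℝ} (hf : Continuous f) (hK : IsCompact K) (hp : 0 ≤ p) :
    Continuous fun t : ℝ => ∫ x in K, max (f x + t) 0 ^ p ∂μ :=
  continuous_parametric_integral_of_continuous
    (((hf.comp continuous_snd).add continuous_fst).max continuous_const |>.rpow_const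
      fun _ => Or.inr hp) hK

lemma ofReal_rpow_neg_mul_ofReal {δ q : ℝ} (hδ : 0 < δ) (y : ℝ) :
    ENNReal.ofReal (δ ^ (-q)) * ENNReal.ofReal (2 * δ ^ q / q * y) =
      ENNReal.ofReal (2 / q * y) := by
  rw [← ENNReal.ofReal_mul (by positivity), rpow_neg hδ.le]
  congr 1
  field_simp [(rpow_pos_of_pos hδ q).ne']

section Directional

variable {N : ℕ} {i : Fin N} {p s δ : ℝ} {u : (Fin N → ℝ) → ℝ} {L : ℝ≥0}

lemma abs_sub_sub_mul_fderiv_stdBasis_le (hu : Differentiable ℝ u)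
    (hL : LipschitzWith L (fderiv ℝ u)) (x : Fin N → ℝ) {h : ℝ} (hh : |h| ≤ δ) :
    |u (x + h • stdBasis N i) - u x - h * fderiv ℝ u x (stdBasis N i)| ≤ |h| * (L * δ) := by
  have := norm_sub_sub_fderiv_le hu hL x (h • stdBasis N i)
  rw [map_smul, smul_eq_mul, norm_smul, norm_stdBasis, mul_one, Real.norm_eq_abs,
    Real.norm_eq_abs] at this
  calc _ ≤ L * |h| ^ 2 := this
    _ = |h| * (L * |h|) := by ring
    _ ≤ |h| * (L * δ) := by gcongr

lemma ofReal_setIntegral_le_periSeminorm (hp : 0 < p) (hq : 0 < p * (1 - s))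
    (hu : Differentiable ℝ u) (hL : LipschitzWith L (fderiv ℝ u)) (hδ : 0 < δ)
    {K : Set (Fin N → ℝ)} (hK : IsCompact K) :
    ENNReal.ofReal (2 * δ ^ (p * (1 - s)) / (p * (1 - s)) *
        ∫ x in K, max (|fderiv ℝ u x (stdBasis N i)| - L * δ) 0 ^ p) ≤
      periSeminorm N i s p δ u := by
  have hDu : Continuous (fderiv ℝ u) := hL.continuous
  rw [← integral_const_mul, ofReal_setIntegral_eq_setLIntegral hK
    (by fun_prop (disch := exact hp.le)) fun x => by positivity]
  refine (setLIntegral_le_lintegral K _).trans (lintegral_mono fun x => ?_)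
  exact le_lintegral_Icc_of_abs_mul_le hp.le hq hδ (le_max_right _ _) fun h hh =>
    abs_mul_max_sub_le_abs (abs_sub_sub_mul_fderiv_stdBasis_le hu hL x (abs_le.mpr hh))

lemma periSeminorm_le_ofReal_setIntegral (hp : 0 < p) (hq : 0 < p * (1 - s))
    (hu : Differentiable ℝ u) (hL : LipschitzWith L (fderiv ℝ u)) (hδ : 0 < δ) (hδ1 : δ ≤ 1)
    (hcpt : HasCompactSupport u) :
    periSeminorm N i s p δ u ≤
      ENNReal.ofReal (2 * δ ^ (p * (1 - s)) / (p * (1 - s)) *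
        ∫ x in Metric.cthickening 1 (tsupport u),
          max (|fderiv ℝ u x (stdBasis N i)| + L * δ) 0 ^ p) := by
  have hDu : Continuous (fderiv ℝ u) := hL.continuous
  rw [← integral_const_mul, ofReal_setIntegral_eq_setLIntegral hcpt.cthickening
    (by fun_prop (disch := exact hp.le)) fun x => by positivity,
    periSeminorm, ← setLIntegral_eq_of_support_subset (s := Metric.cthickening 1 (tsupport u))]
  · exact lintegral_mono fun x => lintegral_Icc_le_of_le_abs_mul hp.le hq hδ (le_max_right _ _)
      (fun _ => abs_nonneg _) fun h hh =>
        abs_le_abs_mul_max_add (abs_sub_sub_mul_fderiv_stdBasis_le hu hL x (abs_le.mpr hh))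
  · intro x hx
    by_contra hK
    refine hx (setLIntegral_eq_zero measurableSet_Icc fun h hh => ?_)
    have hh1 : ‖h • stdBasis N i‖ ≤ 1 := by
      rw [norm_smul, norm_stdBasis, mul_one]
      exact (abs_le.mpr hh).trans hδ1
    rw [eq_zero_of_notMem_cthickening_tsupport hK hh1,
      ← add_zero x, eq_zero_of_notMem_cthickening_tsupport hK (norm_zero.trans_le zero_le_one)]
    simp [zero_rpow hp.ne']

end Directional

theorem periSeminorm_BBM_limit_smooth_general (N : ℕ) (i : Fin N)
    (p s : ℝ) (hp : 1 < p) (hs1 : s < 1)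
    (u : (Fin N → ℝ) → ℝ) (hu : ContDiff ℝ 2 u) (hcpt : HasCompactSupport u) :
    Tendsto (fun δ : ℝ =>
        ENNReal.ofReal (δ ^ (-(p * (1 - s)))) * periSeminorm N i s p δ u)
      (𝓝[>] 0)
      (𝓝 (ENNReal.ofReal (2 / (p * (1 - s)) *
        ∫ x : Fin N → ℝ, |fderiv ℝ u x (stdBasis N i)| ^ p))) := by
  have hp0 : 0 < p := by linarith
  have hq : 0 < p * (1 - s) := mul_pos hp0 (by linarith)
  have hu1 : Differentiable ℝ u := hu.differentiable (by norm_num)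
  obtain ⟨L, hL⟩ := ContDiff.lipschitzWith_of_hasCompactSupport (hcpt.fderiv ℝ)
    (hu.fderiv_right (m := 1) (by norm_num)) one_ne_zero
  set K := Metric.cthickening 1 (tsupport u)
  set Φ : ℝ → ℝ := fun t => ∫ x in K, max (|fderiv ℝ u x (stdBasis N i)| + t) 0 ^ p
  have hΦ : Continuous Φ := continuous_setIntegral_max_add_rpow
    (hL.continuous.clm_apply continuous_const).abs hcpt.cthickening hp0.le
  have hΦ0 : Φ 0 = ∫ x, |fderiv ℝ u x (stdBasis N i)| ^ p := by
    simp only [Φ, add_zero, abs_nonneg, max_eq_left]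
    refine setIntegral_eq_integral_of_forall_compl_eq_zero fun x hx => ?_
    rw [image_eq_zero_of_notMem_tsupport fun hmem =>
      hx (Metric.self_subset_cthickening _ (tsupport_fderiv_subset ℝ hmem))]
    simp [zero_rpow hp0.ne']
  have hlim (c : ℝ) : Tendsto (fun δ => ENNReal.ofReal (2 / (p * (1 - s)) * Φ (c * δ)))
      (𝓝[>] 0) (𝓝 (ENNReal.ofReal (2 / (p * (1 - s)) * Φ 0))) :=
    ((ENNReal.continuous_ofReal.comp (by fun_prop)).tendsto' 0 _ (by simp)).mono_left
      nhdsWithin_le_nhds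
  rw [← hΦ0]
  refine tendsto_of_tendsto_of_tendsto_of_le_of_le' (hlim (-L)) (hlim L) ?_ ?_ <;>
    filter_upwards [Ioc_mem_nhdsGT zero_lt_one] with δ ⟨hδ, hδ1⟩ <;>
    rw [← ofReal_rpow_neg_mul_ofReal hδ] <;> gcongr
  · simpa only [Φ, neg_mul, ← sub_eq_add_neg] using
      ofReal_setIntegral_le_periSeminorm hp0 hq hu1 hL hδ hcpt.cthickening
  · exact periSeminorm_le_ofReal_setIntegral hp0 hq hu1 hL hδ hδ1 hcpt

theorem periSeminorm_BBM_limit_smooth (N : ℕ) (hN : 1 ≤ N) (i : Fin N)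
    (p s : ℝ) (hp : 1 < p) (hs : 0 < s) (hs1 : s < 1)
    (u : (Fin N → ℝ) → ℝ) (hu : ContDiff ℝ 2 u) (hcpt : HasCompactSupport u) :
    Tendsto (fun δ : ℝ =>
        ENNReal.ofReal (δ ^ (-(p * (1 - s)))) * periSeminorm N i s p δ u)
      (𝓝[>] 0)
      (𝓝 (ENNReal.ofReal (2 / (p * (1 - s)) *
        ∫ x : Fin N → ℝ, |fderiv ℝ u x (stdBasis N i)| ^ p))) :=
  periSeminorm_BBM_limit_smooth_general N i p s hp hs1 u hu hcpt

end
end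

section
/- Let u ∈ C^2_c(ℝ^N) with p as above. Then ∫_{ℝ^N} (2/p̄(x)) |∂_1 u(x)|^{p̄(x)} dx ≤ liminf_{s↑1} (1−s) ∫_{ℝ^N}∫_ℝ |u(x+h e_1) − u(x)|^{p(x, x+h e_1)} |h|^{−1−s p(x, x+h e_1)} dh dx. -/
/-!
By Fatou's lemma in `x` the claim reduces to a one-dimensional one. If `|v h| / |h| → a` and
`r h → q > 0` as `h → 0`, then for every `t > 0` and `0 < |h| < δ` the integrand
`|v h|^{r h} / |h|^{1 + s r h}` is at least `(a^q - t) |h|^{(1-s)(q+t) - 1}`, uniformly in `s < 1`.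
Integrating over `0 < |h| < δ` and multiplying by `1 - s` gives
`2 (a^q - t) δ^{(1-s)(q+t)} / (q+t)`, which tends to `2 (a^q - t) / (q + t)` as `s → 1⁻`;
then let `t → 0⁺`. For `v h = u (x + h e₁) - u x` and `r h = p (x, x + h e₁)` one has
`a = |∂₁u(x)|` and `q = p̄(x)`.
-/

open MeasureTheory Real Filter Topology
open scoped ENNReal

noncomputable section

/-- The directional variable-exponent Gagliardo modular
`J_{s,p}(u) = ∫_{ℝ^N} ∫_ℝ |u(x+h e_i) − u(x)|^{p(x,x+h e_i)} / |h|^{1+s p(x,x+h e_i)} dh dx`. -/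
def dirModular (N : ℕ) (i : Fin N) (s : ℝ) (p : (Fin N → ℝ) → (Fin N → ℝ) → ℝ)
    (u : (Fin N → ℝ) → ℝ) : ℝ≥0∞ :=
  ∫⁻ x : Fin N → ℝ, ∫⁻ h : ℝ,
    ENNReal.ofReal (|u (x + h • stdBasis N i) - u x| ^ p x (x + h • stdBasis N i) /
      |h| ^ (1 + s * p x (x + h • stdBasis N i)))

theorem ofReal_integral_le_lintegral_ofReal {α : Type*} [MeasurableSpace α] {μ : Measure α}
    {f : α → ℝ} (hf : 0 ≤ f) :
    ENNReal.ofReal (∫ a, f a ∂μ) ≤ ∫⁻ a, ENNReal.ofReal (f a) ∂μ := by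
  have h := enorm_integral_le_lintegral_enorm (μ := μ) f
  rwa [Real.enorm_of_nonneg (integral_nonneg hf),
    lintegral_congr fun a => Real.enorm_of_nonneg (hf a)] at h

theorem lintegral_Ioo_rpow_sub_one {δ E : ℝ} (hδ : 0 < δ) (hE : 0 < E) :
    ∫⁻ h in Set.Ioo 0 δ, ENNReal.ofReal (h ^ (E - 1)) = ENNReal.ofReal (δ ^ E / E) := by
  have hint : IntegrableOn (fun h : ℝ => h ^ (E - 1)) (Set.Ioo 0 δ) :=
    (intervalIntegrable_iff_integrableOn_Ioo_of_le hδ.le).mp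
      (intervalIntegral.intervalIntegrable_rpow' (by linarith))
  rw [← ofReal_integral_eq_lintegral_ofReal hint
      ((ae_restrict_mem measurableSet_Ioo).mono fun h hh => rpow_nonneg hh.1.le _),
    ← integral_Ioc_eq_integral_Ioo, ← intervalIntegral.integral_of_le hδ.le,
    integral_rpow (Or.inl (by linarith)), sub_add_cancel, zero_rpow hE.ne', sub_zero]

theorem lintegral_Ioi_add_lintegral_Ioi_comp_neg_le (F : ℝ → ℝ≥0∞) :
    (∫⁻ h in Set.Ioi 0, F h) + ∫⁻ h in Set.Ioi 0, F (-h) ≤ ∫⁻ h, F h := by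
  have hneg : ∫⁻ h in Set.Ioi 0, F (-h) = ∫⁻ h in Set.Iio 0, F h := by
    simpa using (Measure.measurePreserving_neg (volume : Measure ℝ)).setLIntegral_comp_preimage_emb
      (Homeomorph.neg ℝ).measurableEmbedding F (Set.Iio 0)
  rw [hneg, ← lintegral_union measurableSet_Iio (Set.Ioi_disjoint_Iio_same (a := (0 : ℝ)))]
  exact setLIntegral_le_lintegral _ _

theorem ofReal_le_lintegral_of_abs_rpow_le {F : ℝ → ℝ≥0∞} {m δ E : ℝ} (hδ : 0 < δ) (hE : 0 < E)
    (hF : ∀ h, h ≠ 0 → |h| < δ → ENNReal.ofReal (m * |h| ^ (E - 1)) ≤ F h) :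
    ENNReal.ofReal (2 * m * δ ^ E / E) ≤ ∫⁻ h, F h := by
  have half : ∀ G : ℝ → ℝ≥0∞, (∀ h ∈ Set.Ioo 0 δ, ENNReal.ofReal (m * h ^ (E - 1)) ≤ G h) →
      ENNReal.ofReal (m * (δ ^ E / E)) ≤ ∫⁻ h in Set.Ioi 0, G h := fun G hG =>
    calc ENNReal.ofReal (m * (δ ^ E / E))
        = ENNReal.ofReal m * ∫⁻ h in Set.Ioo 0 δ, ENNReal.ofReal (h ^ (E - 1)) := by
          rw [lintegral_Ioo_rpow_sub_one hδ hE,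
            ENNReal.ofReal_mul' (div_nonneg (rpow_nonneg hδ.le _) hE.le)]
      _ = ∫⁻ h in Set.Ioo 0 δ, ENNReal.ofReal m * ENNReal.ofReal (h ^ (E - 1)) :=
          (lintegral_const_mul' _ _ ENNReal.ofReal_ne_top).symm
      _ ≤ ∫⁻ h in Set.Ioo 0 δ, G h := setLIntegral_mono' measurableSet_Ioo fun h hh =>
          (ENNReal.ofReal_mul' (rpow_nonneg hh.1.le _)).symm.trans_le (hG h hh)
      _ ≤ ∫⁻ h in Set.Ioi 0, G h := lintegral_mono_set Set.Ioo_subset_Ioi_self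
  calc ENNReal.ofReal (2 * m * δ ^ E / E)
      = ENNReal.ofReal (m * (δ ^ E / E) + m * (δ ^ E / E)) := by ring_nf
    _ ≤ ENNReal.ofReal (m * (δ ^ E / E)) + ENNReal.ofReal (m * (δ ^ E / E)) :=
        ENNReal.ofReal_add_le
    _ ≤ (∫⁻ h in Set.Ioi 0, F h) + ∫⁻ h in Set.Ioi 0, F (-h) := by
        refine add_le_add (half _ fun h hh => ?_) (half _ fun h hh => ?_)
        · simpa [abs_of_pos hh.1] using hF h hh.1.ne' (by rw [abs_of_pos hh.1]; exact hh.2)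
        · simpa [abs_of_pos hh.1] using
            hF (-h) (neg_ne_zero.mpr hh.1.ne') (by rw [abs_neg, abs_of_pos hh.1]; exact hh.2)
    _ ≤ ∫⁻ h, F h := lintegral_Ioi_add_lintegral_Ioi_comp_neg_le F

def fracIntegrand (v r : ℝ → ℝ) (s h : ℝ) : ℝ :=
  |v h| ^ r h / |h| ^ (1 + s * r h)

def fracModular (v r : ℝ → ℝ) (s : ℝ) : ℝ≥0∞ :=
  ∫⁻ h, ENNReal.ofReal (fracIntegrand v r s h)

theorem dirModular_eq_lintegral_fracModular (N : ℕ) (i : Fin N) (s : ℝ)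
    (p : (Fin N → ℝ) → (Fin N → ℝ) → ℝ) (u : (Fin N → ℝ) → ℝ) :
    dirModular N i s p u = ∫⁻ x, fracModular (fun h => u (x + h • stdBasis N i) - u x)
      (fun h => p x (x + h • stdBasis N i)) s :=
  rfl

theorem fracIntegrand_eq_mul (v r : ℝ → ℝ) (s : ℝ) {h : ℝ} (hh : h ≠ 0) :
    fracIntegrand v r s h = (|v h| / |h|) ^ r h * |h| ^ ((1 - s) * r h - 1) := by
  have habs : 0 < |h| := abs_pos.mpr hh
  rw [fracIntegrand, div_rpow (abs_nonneg _) habs.le,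
    show (1 - s) * r h - 1 = r h - (1 + s * r h) by ring, rpow_sub habs]
  field_simp [(rpow_pos_of_pos habs (r h)).ne']

section OneDim

variable {v r : ℝ → ℝ} {a q : ℝ}

theorem eventually_mul_rpow_le_fracIntegrand
    (hv : Tendsto (fun h => |v h| / |h|) (𝓝[≠] 0) (𝓝 a))
    (hr : Tendsto r (𝓝[≠] 0) (𝓝 q)) (hq : 0 < q) {t : ℝ} (ht : 0 < t) :
    ∀ᶠ h in 𝓝[≠] 0, ∀ s < 1,
      (a ^ q - t) * |h| ^ ((1 - s) * (q + t) - 1) ≤ fracIntegrand v r s h := by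
  have hpow : Tendsto (fun h => (|v h| / |h|) ^ r h) (𝓝[≠] 0) (𝓝 (a ^ q)) :=
    hv.rpow hr (Or.inr hq)
  filter_upwards [hpow.eventually (eventually_gt_nhds (sub_lt_self _ ht)),
    hr.eventually (eventually_lt_nhds (lt_add_of_pos_right q ht)), self_mem_nhdsWithin,
    nhdsWithin_le_nhds (Ioo_mem_nhds neg_one_lt_zero one_pos)] with h hlow hrh hh0 hh1 s hs
  have habs : 0 < |h| := abs_pos.mpr hh0
  have hexp : |h| ^ ((1 - s) * (q + t) - 1) ≤ |h| ^ ((1 - s) * r h - 1) :=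
    rpow_le_rpow_of_exponent_ge habs (abs_le.mpr ⟨hh1.1.le, hh1.2.le⟩)
      (by nlinarith)
  rw [fracIntegrand_eq_mul v r s hh0]
  calc (a ^ q - t) * |h| ^ ((1 - s) * (q + t) - 1)
      ≤ (|v h| / |h|) ^ r h * |h| ^ ((1 - s) * (q + t) - 1) :=
        mul_le_mul_of_nonneg_right hlow.le (rpow_nonneg habs.le _)
    _ ≤ (|v h| / |h|) ^ r h * |h| ^ ((1 - s) * r h - 1) :=
        mul_le_mul_of_nonneg_left hexp (rpow_nonneg (by positivity) _)

theorem ofReal_two_mul_sub_div_add_le_liminf_fracModular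
    (hv : Tendsto (fun h => |v h| / |h|) (𝓝[≠] 0) (𝓝 a))
    (hr : Tendsto r (𝓝[≠] 0) (𝓝 q)) (hq : 0 < q) {t : ℝ} (ht : 0 < t) :
    ENNReal.ofReal (2 * (a ^ q - t) / (q + t)) ≤
      liminf (fun s => ENNReal.ofReal (1 - s) * fracModular v r s) (𝓝[<] 1) := by
  obtain ⟨δ, hδ, hbound⟩ := Metric.eventually_nhds_iff.mp
    (eventually_nhdsWithin_iff.mp (eventually_mul_rpow_le_fracIntegrand hv hr hq ht))
  set K := 2 * (a ^ q - t) / (q + t)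
  have hqt : 0 < q + t := by linarith
  have hlower : ∀ s < 1, ENNReal.ofReal (δ ^ ((1 - s) * (q + t))) * ENNReal.ofReal K ≤
      ENNReal.ofReal (1 - s) * fracModular v r s := fun s hs => by
    have h1s : 0 < 1 - s := sub_pos.mpr hs
    have hE : 0 < (1 - s) * (q + t) := mul_pos h1s hqt
    have hint := ofReal_le_lintegral_of_abs_rpow_le
      (F := fun h => ENNReal.ofReal (fracIntegrand v r s h)) hδ hE fun h hh0 hhδ =>
        ENNReal.ofReal_le_ofReal (hbound (by simpa using hhδ) hh0 s hs)
    calc ENNReal.ofReal (δ ^ ((1 - s) * (q + t))) * ENNReal.ofReal K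
        = ENNReal.ofReal (1 - s) *
            ENNReal.ofReal (2 * (a ^ q - t) * δ ^ ((1 - s) * (q + t)) / ((1 - s) * (q + t))) := by
          rw [← ENNReal.ofReal_mul (rpow_nonneg hδ.le _), ← ENNReal.ofReal_mul h1s.le]
          congr 1
          simp only [K]
          field_simp
      _ ≤ _ := mul_le_mul_right hint _
  have hlim : Tendsto (fun s => ENNReal.ofReal (δ ^ ((1 - s) * (q + t))) * ENNReal.ofReal K)
      (𝓝[<] 1) (𝓝 (ENNReal.ofReal K)) := by
    have hcont : Continuous fun s : ℝ => δ ^ ((1 - s) * (q + t)) :=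
      continuous_const.rpow (by fun_prop) fun _ => Or.inl hδ.ne'
    have := ((ENNReal.continuous_ofReal.comp hcont).tendsto 1).mono_left
      (nhdsWithin_le_nhds (s := Set.Iio 1))
    simpa using ENNReal.Tendsto.mul_const this (Or.inr ENNReal.ofReal_ne_top)
  rw [← hlim.liminf_eq]
  exact liminf_le_liminf (eventually_nhdsWithin_of_forall hlower)

theorem ofReal_two_div_mul_rpow_le_liminf_fracModular
    (hv : Tendsto (fun h => |v h| / |h|) (𝓝[≠] 0) (𝓝 a))
    (hr : Tendsto r (𝓝[≠] 0) (𝓝 q)) (hq : 0 < q) :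
    ENNReal.ofReal (2 / q * a ^ q) ≤
      liminf (fun s => ENNReal.ofReal (1 - s) * fracModular v r s) (𝓝[<] 1) := by
  have hlim : Tendsto (fun t => ENNReal.ofReal (2 * (a ^ q - t) / (q + t))) (𝓝[>] 0)
      (𝓝 (ENNReal.ofReal (2 / q * a ^ q))) := by
    have hcont : ContinuousAt (fun t => 2 * (a ^ q - t) / (q + t)) 0 :=
      by fun_prop (disch := simpa using hq.ne')
    rw [show 2 / q * a ^ q = 2 * (a ^ q - 0) / (q + 0) by ring]
    exact (ENNReal.continuous_ofReal.continuousAt.comp hcont).tendsto.mono_left nhdsWithin_le_nhds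
  exact le_of_tendsto hlim (eventually_nhdsWithin_of_forall (s := Set.Ioi 0) fun t ht =>
    ofReal_two_mul_sub_div_add_le_liminf_fracModular hv hr hq ht)

end OneDim

theorem HasFDerivAt.tendsto_abs_sub_div_abs {E : Type*} [NormedAddCommGroup E] [NormedSpace ℝ E]
    {u : E → ℝ} {L : E →L[ℝ] ℝ} {x : E} (hu : HasFDerivAt u L x) (e : E) :
    Tendsto (fun h : ℝ => |u (x + h • e) - u x| / |h|) (𝓝[≠] 0) (𝓝 |L e|) := by
  have hline : HasDerivAt (fun h : ℝ => u (x + h • e)) (L e) 0 := by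
    refine hu.comp_hasDerivAt_of_eq 0 ?_ (by simp)
    simpa using ((hasDerivAt_id (0 : ℝ)).smul_const e).const_add x
  have := (continuous_abs.tendsto _).comp (hasDerivAt_iff_tendsto_slope_zero.mp hline)
  simpa [Function.comp_def, abs_mul, div_eq_inv_mul] using this

theorem measurable_fracModular_directional {E : Type*} [NormedAddCommGroup E] [NormedSpace ℝ E]
    [MeasurableSpace E] [BorelSpace E] [SecondCountableTopology E]
    {u : E → ℝ} (hu : Continuous u) {p : E → E → ℝ}
    (hp : Continuous fun q : E × E => p q.1 q.2) (e : E) (s : ℝ) :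
    Measurable fun x =>
      fracModular (fun h => u (x + h • e) - u x) (fun h => p x (x + h • e)) s := by
  refine Measurable.lintegral_prod_right' (f := fun z : E × ℝ => ENNReal.ofReal
    (fracIntegrand (fun h => u (z.1 + h • e) - u z.1) (fun h => p z.1 (z.1 + h • e)) s z.2)) ?_
  have hpz : Continuous fun z : E × ℝ => p z.1 (z.1 + z.2 • e) :=
    hp.comp (by fun_prop : Continuous fun z : E × ℝ => (z.1, z.1 + z.2 • e))
  unfold fracIntegrand
  fun_prop

theorem varExp_BBM_liminf_general (N : ℕ) (hN : 0 < N)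
    (p : (Fin N → ℝ) → (Fin N → ℝ) → ℝ)
    (hpcont : Continuous fun q : (Fin N → ℝ) × (Fin N → ℝ) => p q.1 q.2)
    (pm pM : ℝ) (hpm : 1 < pm)
    (hpbounds : ∀ x y, pm ≤ p x y ∧ p x y ≤ pM)
    (u : (Fin N → ℝ) → ℝ) (hu : ContDiff ℝ 2 u) :
    ENNReal.ofReal (∫ x : Fin N → ℝ,
        2 / p x x * |fderiv ℝ u x (stdBasis N ⟨0, hN⟩)| ^ p x x) ≤
      Filter.liminf (fun s : ℝ =>
        ENNReal.ofReal (1 - s) * dirModular N ⟨0, hN⟩ s p u) (𝓝[<] 1) := by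
  set e := stdBasis N ⟨0, hN⟩
  have hdiff : Differentiable ℝ u := hu.differentiable (by norm_num)
  have hdiag : ∀ x, 0 < p x x := fun x => by linarith [(hpbounds x x).1]
  have hr : ∀ x, Tendsto (fun h : ℝ => p x (x + h • e)) (𝓝[≠] 0) (𝓝 (p x x)) := fun x => by
    have := (hpcont.comp (by fun_prop : Continuous fun h : ℝ => (x, x + h • e))).tendsto 0
    simpa [Function.comp_def] using this.mono_left nhdsWithin_le_nhds
  calc ENNReal.ofReal (∫ x, 2 / p x x * |fderiv ℝ u x e| ^ p x x)
      ≤ ∫⁻ x, ENNReal.ofReal (2 / p x x * |fderiv ℝ u x e| ^ p x x) :=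
        ofReal_integral_le_lintegral_ofReal fun x =>
          mul_nonneg (div_nonneg zero_le_two (hdiag x).le) (rpow_nonneg (abs_nonneg _) _)
    _ ≤ ∫⁻ x, liminf (fun s => ENNReal.ofReal (1 - s) *
          fracModular (fun h => u (x + h • e) - u x) (fun h => p x (x + h • e)) s) (𝓝[<] 1) :=
        lintegral_mono fun x => ofReal_two_div_mul_rpow_le_liminf_fracModular
          ((hdiff x).hasFDerivAt.tendsto_abs_sub_div_abs e) (hr x) (hdiag x)
    _ ≤ liminf (fun s => ∫⁻ x, ENNReal.ofReal (1 - s) *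
          fracModular (fun h => u (x + h • e) - u x) (fun h => p x (x + h • e)) s) (𝓝[<] 1) :=
        lintegral_liminf_le fun s =>
          (measurable_fracModular_directional hdiff.continuous hpcont e s).const_mul _
    _ = liminf (fun s => ENNReal.ofReal (1 - s) * dirModular N ⟨0, hN⟩ s p u) (𝓝[<] 1) := by
        simp_rw [dirModular_eq_lintegral_fracModular,
          lintegral_const_mul' _ _ ENNReal.ofReal_ne_top]
        rfl

theorem varExp_BBM_liminf (N : ℕ) (hN : 0 < N)
    (p : (Fin N → ℝ) → (Fin N → ℝ) → ℝ)
    (hpcont : Continuous fun q : (Fin N → ℝ) × (Fin N → ℝ) => p q.1 q.2)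
    (hpsymm : ∀ x y, p x y = p y x)
    (pm pM : ℝ) (hpm : 1 < pm)
    (hpbounds : ∀ x y, pm ≤ p x y ∧ p x y ≤ pM)
    (u : (Fin N → ℝ) → ℝ) (hu : ContDiff ℝ 2 u) (hcpt : HasCompactSupport u) :
    ENNReal.ofReal (∫ x : Fin N → ℝ,
        2 / p x x * |fderiv ℝ u x (stdBasis N ⟨0, hN⟩)| ^ p x x) ≤
      Filter.liminf (fun s : ℝ =>
        ENNReal.ofReal (1 - s) * dirModular N ⟨0, hN⟩ s p u) (𝓝[<] 1) :=
  varExp_BBM_liminf_general N hN p hpcont pm pM hpm hpbounds u hu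

end
end

section
/- Let u ∈ C^2_c(ℝ^N) and p as above. Then for every x ∈ ℝ^N, lim_{s↑1} (1−s) ∫_ℝ |u(x+h e_1) − u(x)|^{p(x, x+h e_1)} |h|^{−1−s p(x, x+h e_1)} dh = (2/p̄(x)) |∂_1 u(x)|^{p̄(x)}. -/
open MeasureTheory Real Filter Topology
open scoped ENNReal

noncomputable section

/-! For the profile `φ h = u (x + h e₁) - u x` one has `|φ h| ≈ |D| |h|` with `D = ∂₁u(x)`, and
`P h = p(x, x + h e₁) ≈ P 0` near `h = 0`. So for every small `r > 0` there is `δ > 0` such that on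
`[-δ, δ]` the integrand lies between constants times `|h| ^ ((1 - s) (P 0 ± r) - 1)`, and
`(1 - s) ∫_{-δ}^{δ} |h| ^ ((1 - s) q - 1) dh = 2 δ ^ ((1 - s) q) / q → 2 / q` as `s → 1`.
Outside `[-δ, δ]` the integrand has an integrable majorant uniform in `s ∈ [1/2, 1)`, so the
factor `1 - s` kills it. The resulting bounds on `liminf` and `limsup` both tend to
`2 |D| ^ P 0 / P 0` as `r → 0`. -/

open Set

lemma rpow_le_max_rpow {a q q₁ q₂ : ℝ} (ha : 0 < a) (h₁ : q₁ ≤ q) (h₂ : q ≤ q₂) :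
    a ^ q ≤ max (a ^ q₁) (a ^ q₂) := by
  rcases le_total a 1 with h | h
  · exact (rpow_le_rpow_of_exponent_ge ha h h₁).trans (le_max_left _ _)
  · exact (rpow_le_rpow_of_exponent_le h h₂).trans (le_max_right _ _)

lemma min_rpow_le_rpow {a q q₁ q₂ : ℝ} (ha : 0 ≤ a) (h₁ : q₁ ≤ q) (h₂ : q ≤ q₂) :
    min (a ^ q₁) (a ^ q₂) ≤ a ^ q := by
  rcases ha.eq_or_lt with rfl | ha
  · rcases lt_trichotomy q 0 with hq | rfl | hq
    · rw [zero_rpow hq.ne]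
      exact (min_le_left _ _).trans_eq (zero_rpow (h₁.trans_lt hq).ne)
    · exact (min_le_left _ _).trans ((zero_rpow_le_one _).trans_eq (rpow_zero 0).symm)
    · rw [zero_rpow hq.ne']
      exact (min_le_right _ _).trans_eq (zero_rpow (hq.trans_le h₂).ne')
  rcases le_total a 1 with h | h
  · exact (min_le_right _ _).trans (rpow_le_rpow_of_exponent_ge ha h h₂)
  · exact (min_le_left _ _).trans (rpow_le_rpow_of_exponent_le h h₁)

lemma mul_rpow_div_rpow {a t q s : ℝ} (ha : 0 ≤ a) (ht : 0 < t) :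
    (a * t) ^ q / t ^ (1 + s * q) = a ^ q * t ^ ((1 - s) * q - 1) := by
  rw [mul_rpow ha ht.le, mul_div_assoc, ← rpow_sub ht]
  ring_nf

lemma rpow_div_rpow_le_of_le_mul {y a t s q q₁ q₂ : ℝ} (hy : 0 ≤ y) (hya : y ≤ a * t)
    (ha : 0 < a) (ht : 0 < t) (ht₁ : t ≤ 1) (hs : s ≤ 1) (hq₁ : q₁ ≤ q) (hq₂ : q ≤ q₂)
    (hq : 0 ≤ q) :
    y ^ q / t ^ (1 + s * q) ≤ max (a ^ q₁) (a ^ q₂) * t ^ ((1 - s) * q₁ - 1) :=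
  calc y ^ q / t ^ (1 + s * q)
      ≤ (a * t) ^ q / t ^ (1 + s * q) := by gcongr
    _ = a ^ q * t ^ ((1 - s) * q - 1) := mul_rpow_div_rpow ha.le ht
    _ ≤ max (a ^ q₁) (a ^ q₂) * t ^ ((1 - s) * q₁ - 1) :=
      mul_le_mul (rpow_le_max_rpow ha hq₁ hq₂)
        (rpow_le_rpow_of_exponent_ge ht ht₁ (by nlinarith)) (by positivity)
        ((rpow_pos_of_pos ha _).le.trans (le_max_left _ _))

lemma le_rpow_div_rpow_of_mul_le {y a t s q q₁ q₂ : ℝ} (hay : a * t ≤ y)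
    (ha : 0 ≤ a) (ht : 0 < t) (ht₁ : t ≤ 1) (hs : s ≤ 1) (hq₁ : q₁ ≤ q) (hq₂ : q ≤ q₂)
    (hq : 0 ≤ q) :
    min (a ^ q₁) (a ^ q₂) * t ^ ((1 - s) * q₂ - 1) ≤ y ^ q / t ^ (1 + s * q) :=
  calc min (a ^ q₁) (a ^ q₂) * t ^ ((1 - s) * q₂ - 1)
      ≤ a ^ q * t ^ ((1 - s) * q - 1) :=
      mul_le_mul (min_rpow_le_rpow ha hq₁ hq₂)
        (rpow_le_rpow_of_exponent_ge ht ht₁ (by nlinarith)) (by positivity) (rpow_nonneg ha _)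
    _ = (a * t) ^ q / t ^ (1 + s * q) := (mul_rpow_div_rpow ha ht).symm
    _ ≤ y ^ q / t ^ (1 + s * q) := by gcongr

lemma rpow_div_rpow_le_add_rpow_neg {y t s q M pm pM : ℝ} (hy : 0 ≤ y) (hyM : y ≤ M) (ht : 0 < t)
    (hs : s ∈ Icc (1 / 2) 1) (hpm : 0 ≤ pm) (hq : pm ≤ q ∧ q ≤ pM) :
    y ^ q / t ^ (1 + s * q) ≤ max M 1 ^ pM * (t ^ (-(1 + pM)) + t ^ (-(1 + pm / 2))) := by
  have hnum : y ^ q ≤ max M 1 ^ pM :=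
    (rpow_le_rpow hy (hyM.trans (le_max_left _ _)) (hpm.trans hq.1)).trans
      (rpow_le_rpow_of_exponent_le (le_max_right _ _) hq.2)
  have hden : t ^ (-(1 + s * q)) ≤ t ^ (-(1 + pM)) + t ^ (-(1 + pm / 2)) :=
    (rpow_le_max_rpow ht (by nlinarith [hs.1, hs.2]) (by nlinarith [hs.1, hs.2])).trans
      (max_le_add_of_nonneg (by positivity) (by positivity))
  rw [div_eq_mul_inv, ← rpow_neg ht.le]
  exact mul_le_mul hnum hden (by positivity) (by positivity)

lemma lintegral_Icc_comp_abs (f : ℝ → ℝ≥0∞) {δ : ℝ} (hδ : 0 ≤ δ) :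
    ∫⁻ x in Icc (-δ) δ, f |x| = 2 * ∫⁻ x in Ioc 0 δ, f x := by
  have hIoc : ∫⁻ x in Ioc 0 δ, f |x| = ∫⁻ x in Ioc 0 δ, f x :=
    setLIntegral_congr_fun measurableSet_Ioc fun x hx => by rw [abs_of_pos hx.1]
  have hneg : ∫⁻ x in Icc (-δ) 0, f |x| = ∫⁻ x in Icc 0 δ, f |x| := by
    have := (Measure.measurePreserving_neg volume).setLIntegral_comp_emb
      measurableEmbedding_neg (fun x : ℝ => f |x|) (Icc 0 δ)
    simpa only [abs_neg, image_neg_Icc, neg_zero] using this.symm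
  have hdisj : Disjoint (Icc (-δ) 0) (Ioc 0 δ) :=
    (Iic_disjoint_Ioc le_rfl).mono_left Icc_subset_Iic_self
  rw [← Icc_union_Ioc_eq_Icc (neg_nonpos.2 hδ) hδ, lintegral_union measurableSet_Ioc hdisj,
    hneg, ← setLIntegral_congr Ioc_ae_eq_Icc, hIoc, two_mul]

lemma lintegral_Icc_abs_rpow {β δ : ℝ} (hβ : 0 < β) (hδ : 0 ≤ δ) :
    ∫⁻ x in Icc (-δ) δ, ENNReal.ofReal (|x| ^ (β - 1)) = ENNReal.ofReal (2 * δ ^ β / β) := by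
  have hint : IntegrableOn (fun x : ℝ => x ^ (β - 1)) (Ioc 0 δ) :=
    (intervalIntegrable_iff_integrableOn_Ioc_of_le hδ).1
      (intervalIntegral.intervalIntegrable_rpow' (by linarith))
  rw [lintegral_Icc_comp_abs (fun x => ENNReal.ofReal (x ^ (β - 1))) hδ,
    ← ofReal_integral_eq_lintegral_ofReal hint
      ((ae_restrict_iff' measurableSet_Ioc).2 (Eventually.of_forall fun x hx =>
        rpow_nonneg hx.1.le _)),
    ← intervalIntegral.integral_of_le hδ, integral_rpow (Or.inl (by linarith)),
    sub_add_cancel, zero_rpow hβ.ne', sub_zero, ← ENNReal.ofReal_ofNat 2,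
    ← ENNReal.ofReal_mul zero_le_two, mul_div_assoc]

lemma tendsto_one_sub_mul_lintegral_Icc_abs_rpow {c q δ : ℝ} (hc : 0 ≤ c) (hq : 0 < q)
    (hδ : 0 < δ) :
    Tendsto (fun s => ENNReal.ofReal (1 - s) *
        ∫⁻ h in Icc (-δ) δ, ENNReal.ofReal (c * |h| ^ ((1 - s) * q - 1)))
      (𝓝[<] 1) (𝓝 (ENNReal.ofReal (2 * c / q))) := by
  have hlim : Tendsto (fun s : ℝ => ENNReal.ofReal (2 * c * δ ^ ((1 - s) * q) / q))
      (𝓝[<] 1) (𝓝 (ENNReal.ofReal (2 * c / q))) := by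
    have hcont : Continuous fun s : ℝ => 2 * c * δ ^ ((1 - s) * q) / q :=
      (continuous_const.mul
        (continuous_const.rpow (by fun_prop) fun _ => Or.inl hδ.ne')).div_const q
    have h1 := (ENNReal.continuous_ofReal.comp hcont).tendsto 1
    simp only [Function.comp_def, sub_self, zero_mul, rpow_zero, mul_one] at h1
    exact h1.mono_left nhdsWithin_le_nhds
  refine hlim.congr' (eventually_nhdsWithin_of_forall fun s (hs : s < 1) => ?_)
  have hs' : 0 < 1 - s := sub_pos.2 hs
  simp_rw [ENNReal.ofReal_mul hc]
  rw [lintegral_const_mul' _ _ ENNReal.ofReal_ne_top,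
    lintegral_Icc_abs_rpow (mul_pos hs' hq) hδ.le, ← ENNReal.ofReal_mul hc,
    ← ENNReal.ofReal_mul hs'.le]
  congr 1
  field_simp

lemma integrableOn_abs_rpow_neg_compl_Icc {a δ : ℝ} (ha : 1 < a) (hδ : 0 < δ) :
    IntegrableOn (fun h : ℝ => |h| ^ (-a)) (Icc (-δ) δ)ᶜ := by
  have hIoi : IntegrableOn (fun h : ℝ => |h| ^ (-a)) (Ioi δ) :=
    (integrableOn_Ioi_rpow_of_lt (a := -a) (by linarith) hδ).congr_fun
      (fun h hh => by rw [abs_of_pos (hδ.trans hh)]) measurableSet_Ioi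
  have hIio : IntegrableOn (fun h : ℝ => |h| ^ (-a)) (Iio (-δ)) := by
    simpa only [abs_neg, neg_Ioi] using hIoi.comp_neg
  have hcompl : (Icc (-δ) δ)ᶜ = Iio (-δ) ∪ Ioi δ := by
    ext h
    simp only [mem_compl_iff, mem_Icc, mem_union, mem_Iio, mem_Ioi, not_and_or, not_le]
  rw [hcompl]
  exact hIio.union hIoi

def gagliardoIntegrand (φ P : ℝ → ℝ) (s h : ℝ) : ℝ≥0∞ :=
  ENNReal.ofReal (|φ h| ^ P h / |h| ^ (1 + s * P h))

lemma tendsto_one_sub_mul_lintegral_compl_Icc {φ P : ℝ → ℝ} {M pm pM δ : ℝ}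
    (hφ : ∀ h, |φ h| ≤ M) (hpm : 0 < pm) (hP : ∀ h, pm ≤ P h ∧ P h ≤ pM) (hδ : 0 < δ) :
    Tendsto (fun s => ENNReal.ofReal (1 - s) *
        ∫⁻ h in (Icc (-δ) δ)ᶜ, gagliardoIntegrand φ P s h) (𝓝[<] 1) (𝓝 0) := by
  set g : ℝ → ℝ := fun h => max M 1 ^ pM * (|h| ^ (-(1 + pM)) + |h| ^ (-(1 + pm / 2)))
  have hg : IntegrableOn g (Icc (-δ) δ)ᶜ :=
    ((integrableOn_abs_rpow_neg_compl_Icc (by linarith [(hP 0).1, (hP 0).2]) hδ).add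
      (integrableOn_abs_rpow_neg_compl_Icc (by linarith) hδ)).const_mul _
  have hle : ∀ᶠ s in 𝓝[<] 1, ENNReal.ofReal (1 - s) *
      ∫⁻ h in (Icc (-δ) δ)ᶜ, gagliardoIntegrand φ P s h ≤
        ENNReal.ofReal (1 - s) * ∫⁻ h in (Icc (-δ) δ)ᶜ, ENNReal.ofReal (g h) := by
    filter_upwards [Ioo_mem_nhdsLT (by norm_num : (1 / 2 : ℝ) < 1)] with s hs
    refine mul_le_mul_right (setLIntegral_mono' measurableSet_Icc.compl fun h hh => ?_) _
    have hδh : δ < |h| := by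
      rw [mem_compl_iff, mem_Icc, ← abs_le, not_le] at hh
      exact hh
    exact ENNReal.ofReal_le_ofReal (rpow_div_rpow_le_add_rpow_neg (abs_nonneg _) (hφ h)
      (hδ.trans hδh) (Ioo_subset_Icc_self hs) hpm.le (hP h))
  have hzero : Tendsto (fun s => ENNReal.ofReal (1 - s) *
      ∫⁻ h in (Icc (-δ) δ)ᶜ, ENNReal.ofReal (g h)) (𝓝[<] 1) (𝓝 0) := by
    have h1 : Tendsto (fun s : ℝ => ENNReal.ofReal (1 - s)) (𝓝[<] 1) (𝓝 0) := by
      have h : Tendsto (fun s : ℝ => 1 - s) (𝓝 1) (𝓝 (1 - 1)) :=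
        tendsto_const_nhds.sub tendsto_id
      simpa using (ENNReal.tendsto_ofReal h).mono_left nhdsWithin_le_nhds
    simpa using ENNReal.Tendsto.mul_const h1 (Or.inr hg.lintegral_lt_top.ne)
  exact tendsto_of_tendsto_of_tendsto_of_le_of_le' tendsto_const_nhds hzero
    (Eventually.of_forall fun _ => bot_le) hle

lemma exists_Icc_forall_of_eventually {Q : ℝ → Prop} (h : ∀ᶠ x in 𝓝 0, Q x) :
    ∃ δ, 0 < δ ∧ δ ≤ 1 ∧ ∀ x ∈ Icc (-δ) δ, Q x := by
  obtain ⟨ε, hε, hQ⟩ := (nhds_basis_Icc_pos (0 : ℝ)).eventually_iff.1 h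
  refine ⟨min ε 1, lt_min hε one_pos, min_le_right _ _, fun x hx => hQ ?_⟩
  rw [zero_sub, zero_add]
  exact Icc_subset_Icc (neg_le_neg (min_le_left _ _)) (min_le_left _ _) hx

lemma HasDerivAt.eventually_abs_mem_Icc {φ : ℝ → ℝ} {D r : ℝ} (hD : HasDerivAt φ D 0)
    (hφ0 : φ 0 = 0) (hr : 0 < r) :
    ∀ᶠ h in 𝓝 0, |φ h| ∈ Icc ((|D| - r) * |h|) ((|D| + r) * |h|) := by
  filter_upwards [(hasDerivAt_iff_isLittleO.1 hD).def hr] with h hh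
  simp only [hφ0, sub_zero, Real.norm_eq_abs, smul_eq_mul] at hh
  have hhD : |h * D| = |D| * |h| := by rw [abs_mul, mul_comm]
  have h₁ := abs_sub_abs_le_abs_sub (φ h) (h * D)
  have h₂ := abs_sub_abs_le_abs_sub (h * D) (φ h)
  rw [abs_sub_comm] at h₂
  constructor <;> linarith

lemma exists_Icc_local_bounds {φ P : ℝ → ℝ} {D r : ℝ} (hPc : ContinuousAt P 0)
    (hD : HasDerivAt φ D 0) (hφ0 : φ 0 = 0) (hr : 0 < r) :
    ∃ δ, 0 < δ ∧ δ ≤ 1 ∧ ∀ h ∈ Icc (-δ) δ,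
      |φ h| ∈ Icc ((|D| - r) * |h|) ((|D| + r) * |h|) ∧ P h ∈ Icc (P 0 - r) (P 0 + r) :=
  exists_Icc_forall_of_eventually ((hD.eventually_abs_mem_Icc hφ0 hr).and
    (hPc.eventually (Icc_mem_nhds (by linarith) (by linarith))))

lemma limsup_le_of_hasDerivAt {φ P : ℝ → ℝ} {M pm pM D r : ℝ} (hφ : ∀ h, |φ h| ≤ M)
    (hpm : 0 < pm) (hP : ∀ h, pm ≤ P h ∧ P h ≤ pM) (hPc : ContinuousAt P 0)
    (hD : HasDerivAt φ D 0) (hφ0 : φ 0 = 0) (hr : 0 < r) (hrP : r < P 0) :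
    limsup (fun s => ENNReal.ofReal (1 - s) * ∫⁻ h, gagliardoIntegrand φ P s h) (𝓝[<] 1) ≤
      ENNReal.ofReal (2 * max ((|D| + r) ^ (P 0 - r)) ((|D| + r) ^ (P 0 + r)) / (P 0 - r)) := by
  obtain ⟨δ, hδ, hδ₁, hloc⟩ := exists_Icc_local_bounds hPc hD hφ0 hr
  set c := max ((|D| + r) ^ (P 0 - r)) ((|D| + r) ^ (P 0 + r))
  have hc : 0 ≤ c := (rpow_nonneg (by positivity) _).trans (le_max_left _ _)
  have hcore : ∀ s < 1, ∫⁻ h in Icc (-δ) δ, gagliardoIntegrand φ P s h ≤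
      ∫⁻ h in Icc (-δ) δ, ENNReal.ofReal (c * |h| ^ ((1 - s) * (P 0 - r) - 1)) := by
    intro s hs
    refine lintegral_mono_ae ((ae_restrict_iff' measurableSet_Icc).2 ?_)
    filter_upwards [compl_mem_ae_iff.2 (measure_singleton (0 : ℝ))] with h h0 hh
    obtain ⟨⟨-, hφh⟩, hPh⟩ := hloc h hh
    exact ENNReal.ofReal_le_ofReal (rpow_div_rpow_le_of_le_mul (abs_nonneg _) hφh
      (by positivity) (abs_pos.2 h0) ((abs_le.2 hh).trans hδ₁) hs.le hPh.1 hPh.2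
      (by linarith [hPh.1]))
  have hle : ∀ᶠ s in 𝓝[<] 1, ENNReal.ofReal (1 - s) * ∫⁻ h, gagliardoIntegrand φ P s h ≤
      ENNReal.ofReal (1 - s) *
          (∫⁻ h in Icc (-δ) δ, ENNReal.ofReal (c * |h| ^ ((1 - s) * (P 0 - r) - 1))) +
        ENNReal.ofReal (1 - s) * ∫⁻ h in (Icc (-δ) δ)ᶜ, gagliardoIntegrand φ P s h := by
    filter_upwards [self_mem_nhdsWithin] with s hs
    rw [← lintegral_add_compl _ measurableSet_Icc, mul_add]
    exact add_le_add_left (mul_le_mul_right (hcore s hs) _) _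
  have hlim := (tendsto_one_sub_mul_lintegral_Icc_abs_rpow hc (sub_pos.2 hrP) hδ).add
    (tendsto_one_sub_mul_lintegral_compl_Icc hφ hpm hP hδ)
  rw [add_zero] at hlim
  exact (limsup_le_limsup hle).trans hlim.limsup_eq.le

lemma le_liminf_of_hasDerivAt {φ P : ℝ → ℝ} {D r : ℝ} (hPc : ContinuousAt P 0)
    (hD : HasDerivAt φ D 0) (hφ0 : φ 0 = 0) (hr : 0 < r) (hrP : r < P 0) :
    ENNReal.ofReal (2 * min (max (|D| - r) 0 ^ (P 0 - r)) (max (|D| - r) 0 ^ (P 0 + r)) /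
        (P 0 + r)) ≤
      liminf (fun s => ENNReal.ofReal (1 - s) * ∫⁻ h, gagliardoIntegrand φ P s h) (𝓝[<] 1) := by
  obtain ⟨δ, hδ, hδ₁, hloc⟩ := exists_Icc_local_bounds hPc hD hφ0 hr
  set a := max (|D| - r) 0
  set c := min (a ^ (P 0 - r)) (a ^ (P 0 + r))
  have ha : 0 ≤ a := le_max_right _ _
  have hc : 0 ≤ c := le_min (rpow_nonneg ha _) (rpow_nonneg ha _)
  have hcore : ∀ s < 1,
      ∫⁻ h in Icc (-δ) δ, ENNReal.ofReal (c * |h| ^ ((1 - s) * (P 0 + r) - 1)) ≤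
        ∫⁻ h, gagliardoIntegrand φ P s h := by
    intro s hs
    refine (lintegral_mono_ae ((ae_restrict_iff' measurableSet_Icc).2 ?_)).trans
      (setLIntegral_le_lintegral _ _)
    filter_upwards [compl_mem_ae_iff.2 (measure_singleton (0 : ℝ))] with h h0 hh
    obtain ⟨⟨hφh, -⟩, hPh⟩ := hloc h hh
    have hah : a * |h| ≤ |φ h| := by
      rw [max_mul_of_nonneg _ _ (abs_nonneg h), zero_mul]
      exact max_le hφh (abs_nonneg _)
    exact ENNReal.ofReal_le_ofReal (le_rpow_div_rpow_of_mul_le hah ha (abs_pos.2 h0)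
      ((abs_le.2 hh).trans hδ₁) hs.le hPh.1 hPh.2 (by linarith [hPh.1]))
  have hle : ∀ᶠ s in 𝓝[<] 1, ENNReal.ofReal (1 - s) *
        ∫⁻ h in Icc (-δ) δ, ENNReal.ofReal (c * |h| ^ ((1 - s) * (P 0 + r) - 1)) ≤
      ENNReal.ofReal (1 - s) * ∫⁻ h, gagliardoIntegrand φ P s h := by
    filter_upwards [self_mem_nhdsWithin] with s hs
    exact mul_le_mul_right (hcore s hs) _
  rw [← (tendsto_one_sub_mul_lintegral_Icc_abs_rpow hc (by linarith) hδ).liminf_eq]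
  exact liminf_le_liminf hle

theorem tendsto_one_sub_mul_lintegral_gagliardoIntegrand {φ P : ℝ → ℝ} {M pm pM D : ℝ}
    (hφ : ∀ h, |φ h| ≤ M) (hpm : 0 < pm) (hP : ∀ h, pm ≤ P h ∧ P h ≤ pM)
    (hPc : ContinuousAt P 0) (hD : HasDerivAt φ D 0) (hφ0 : φ 0 = 0) :
    Tendsto (fun s => ENNReal.ofReal (1 - s) * ∫⁻ h, gagliardoIntegrand φ P s h) (𝓝[<] 1)
      (𝓝 (ENNReal.ofReal (2 / P 0 * |D| ^ P 0))) := by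
  have hP0 : 0 < P 0 := hpm.trans_le (hP 0).1
  have hpow : ∀ b e : ℝ → ℝ, ContinuousAt b 0 → ContinuousAt e 0 → e 0 = P 0 →
      ContinuousAt (fun r => b r ^ e r) 0 :=
    fun b e hb he he0 => hb.rpow he (Or.inr (he0 ▸ hP0))
  have hlo : Tendsto (fun r => ENNReal.ofReal
      (2 * min (max (|D| - r) 0 ^ (P 0 - r)) (max (|D| - r) 0 ^ (P 0 + r)) / (P 0 + r)))
      (𝓝[>] 0) (𝓝 (ENNReal.ofReal (2 / P 0 * |D| ^ P 0))) := by
    have h₁ := hpow (fun r => max (|D| - r) 0) (P 0 - ·) (by fun_prop) (by fun_prop) (sub_zero _)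
    have h₂ := hpow (fun r => max (|D| - r) 0) (P 0 + ·) (by fun_prop) (by fun_prop) (add_zero _)
    have hcont : ContinuousAt (fun r : ℝ =>
        2 * min (max (|D| - r) 0 ^ (P 0 - r)) (max (|D| - r) 0 ^ (P 0 + r)) / (P 0 + r)) 0 :=
      (continuousAt_const.mul (h₁.min h₂)).div (by fun_prop) (by simpa using hP0.ne')
    convert (ENNReal.tendsto_ofReal hcont.tendsto).mono_left nhdsWithin_le_nhds using 2
    simp only [sub_zero, add_zero, max_eq_left (abs_nonneg D), min_self, div_mul_eq_mul_div]
  have hhi : Tendsto (fun r => ENNReal.ofReal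
      (2 * max ((|D| + r) ^ (P 0 - r)) ((|D| + r) ^ (P 0 + r)) / (P 0 - r)))
      (𝓝[>] 0) (𝓝 (ENNReal.ofReal (2 / P 0 * |D| ^ P 0))) := by
    have h₁ := hpow (|D| + ·) (P 0 - ·) (by fun_prop) (by fun_prop) (sub_zero _)
    have h₂ := hpow (|D| + ·) (P 0 + ·) (by fun_prop) (by fun_prop) (add_zero _)
    have hcont : ContinuousAt (fun r : ℝ =>
        2 * max ((|D| + r) ^ (P 0 - r)) ((|D| + r) ^ (P 0 + r)) / (P 0 - r)) 0 :=
      (continuousAt_const.mul (h₁.max h₂)).div (by fun_prop) (by simpa using hP0.ne')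
    convert (ENNReal.tendsto_ofReal hcont.tendsto).mono_left nhdsWithin_le_nhds using 2
    simp only [sub_zero, add_zero, max_self, div_mul_eq_mul_div]
  have hsmall : ∀ᶠ r in 𝓝[>] (0 : ℝ), 0 < r ∧ r < P 0 := Ioo_mem_nhdsGT hP0
  exact tendsto_of_le_liminf_of_limsup_le
    (le_of_tendsto hlo (hsmall.mono fun r hr => le_liminf_of_hasDerivAt hPc hD hφ0 hr.1 hr.2))
    (ge_of_tendsto hhi
      (hsmall.mono fun r hr => limsup_le_of_hasDerivAt hφ hpm hP hPc hD hφ0 hr.1 hr.2))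

theorem varExp_BBM_pointwise_limit_general (N : ℕ) (hN : 0 < N)
    (p : (Fin N → ℝ) → (Fin N → ℝ) → ℝ)
    (hpcont : Continuous fun q : (Fin N → ℝ) × (Fin N → ℝ) => p q.1 q.2)
    (pm pM : ℝ) (hpm : 1 < pm)
    (hpbounds : ∀ x y, pm ≤ p x y ∧ p x y ≤ pM)
    (u : (Fin N → ℝ) → ℝ) (hu : ContDiff ℝ 2 u) (hcpt : HasCompactSupport u)
    (x : Fin N → ℝ) :
    Tendsto (fun s : ℝ =>
        ENNReal.ofReal (1 - s) * ∫⁻ h : ℝ,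
          ENNReal.ofReal (|u (x + h • stdBasis N ⟨0, hN⟩) - u x| ^
              p x (x + h • stdBasis N ⟨0, hN⟩) /
            |h| ^ (1 + s * p x (x + h • stdBasis N ⟨0, hN⟩))))
      (𝓝[<] 1)
      (𝓝 (ENNReal.ofReal (2 / p x x *
        |fderiv ℝ u x (stdBasis N ⟨0, hN⟩)| ^ p x x))) := by
  set e := stdBasis N ⟨0, hN⟩
  obtain ⟨M, hM⟩ := hcpt.exists_bound_of_continuous hu.continuous
  have hφ : ∀ h : ℝ, |u (x + h • e) - u x| ≤ 2 * M := fun h => by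
    have h₁ := hM (x + h • e)
    have h₂ := hM x
    rw [Real.norm_eq_abs] at h₁ h₂
    linarith [abs_sub (u (x + h • e)) (u x)]
  have hline : HasDerivAt (fun h : ℝ => x + h • e) e 0 := by
    simpa using ((hasDerivAt_id (0 : ℝ)).smul_const e).const_add x
  have hD : HasDerivAt (fun h : ℝ => u (x + h • e) - u x) (fderiv ℝ u x e) 0 :=
    ((hu.differentiable (by norm_num) _).hasFDerivAt.comp_hasDerivAt_of_eq 0 hline
      (by simp)).sub_const _
  have hPc : ContinuousAt (fun h : ℝ => p x (x + h • e)) 0 :=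
    (hpcont.comp (by fun_prop : Continuous fun h : ℝ => (x, x + h • e))).continuousAt
  simpa only [gagliardoIntegrand, zero_smul, add_zero] using
    tendsto_one_sub_mul_lintegral_gagliardoIntegrand hφ (zero_lt_one.trans hpm)
      (fun h => hpbounds x _) hPc hD (by simp)

theorem varExp_BBM_pointwise_limit (N : ℕ) (hN : 0 < N)
    (p : (Fin N → ℝ) → (Fin N → ℝ) → ℝ)
    (hpcont : Continuous fun q : (Fin N → ℝ) × (Fin N → ℝ) => p q.1 q.2)
    (hpsymm : ∀ x y, p x y = p y x)
    (pm pM : ℝ) (hpm : 1 < pm)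
    (hpbounds : ∀ x y, pm ≤ p x y ∧ p x y ≤ pM)
    (u : (Fin N → ℝ) → ℝ) (hu : ContDiff ℝ 2 u) (hcpt : HasCompactSupport u)
    (x : Fin N → ℝ) :
    Tendsto (fun s : ℝ =>
        ENNReal.ofReal (1 - s) * ∫⁻ h : ℝ,
          ENNReal.ofReal (|u (x + h • stdBasis N ⟨0, hN⟩) - u x| ^
              p x (x + h • stdBasis N ⟨0, hN⟩) /
            |h| ^ (1 + s * p x (x + h • stdBasis N ⟨0, hN⟩))))
      (𝓝[<] 1)
      (𝓝 (ENNReal.ofReal (2 / p x x *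
        |fderiv ℝ u x (stdBasis N ⟨0, hN⟩)| ^ p x x))) :=
  varExp_BBM_pointwise_limit_general N hN p hpcont pm pM hpm hpbounds u hu hcpt x

end
end
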